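/- arXiv:1304.6926 — 5 statements merged into one kernel-verified Lean document; each statement's English description precedes it below -/
import Mathlib

section
/- Let p ≥ 1, let ξ_0 < ⋯ < ξ_p be distinct real nodes with Lagrange basis polynomials l_0, …, l_p and edge functions e_i = −∑_{k=0}^{i−1} l_k′ (1 ≤ i ≤ p). Define the 0-form projection π⁰α = ∑_{i=0}^{p} α(ξ_i) l_i for α : ℝ → ℝ, and the 1-form projection π¹f = ∑_{i=1}^{p} (∫_{ξ_{i−1}}^{ξ_i} f(ξ) dξ) e_i for integrable f. If α : ℝ → ℝ is continuously differentiable, then the projection commutes with differentiation: (π⁰α)′(t) = (π¹(α′))(t) for all t ∈ ℝ. -/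
open Finset Polynomial

/-!
Write `D k = l_k'(t)`. Since `∑ l_k` interpolates the constant `1` at the `p + 1` nodes and has
degree at most `p`, it equals `1`, so `∑_{k ≤ p} D k = 0`. By the fundamental theorem of calculus
the coefficients of `π¹(α')` are `α(ξ_i) - α(ξ_{i-1})`, and summation by parts turns
`∑_i (α(ξ_i) - α(ξ_{i-1})) e_i(t)` into `∑_i α(ξ_i) D i - α(ξ_p) ∑_k D k = (π⁰α)'(t)`.
-/

theorem sum_Icc_sub_mul_neg_sum_range {R : Type*} [CommRing R] (A D : ℕ → R) (p : ℕ) :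
    ∑ i ∈ Icc 1 p, (A i - A (i - 1)) * -(∑ k ∈ range i, D k) =
      ∑ i ∈ range (p + 1), A i * D i - A p * ∑ k ∈ range (p + 1), D k := by
  induction p with
  | zero => simp
  | succ n ih =>
    rw [sum_Icc_succ_top (by omega), ih, Nat.add_sub_cancel, sum_range_succ _ (n + 1),
      sum_range_succ D (n + 1)]
    ring

namespace Polynomial

theorem sum_eq_one_of_eval_eq_ite {R : Type*} [CommRing R] [IsDomain R] {p : ℕ} {ξ : ℕ → R}
    (hξ : Set.InjOn ξ (range (p + 1))) {l : ℕ → R[X]} (hdeg : ∀ i ≤ p, (l i).natDegree ≤ p)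
    (hl : ∀ i ≤ p, ∀ j ≤ p, (l i).eval (ξ j) = if i = j then 1 else 0) :
    ∑ k ∈ range (p + 1), l k = 1 := by
  have hdegLT : ∀ f : R[X], f.natDegree ≤ p → f ∈ degreeLT R (p + 1) := fun f hf =>
    mem_degreeLT.2 <| (natDegree_le_iff_degree_le.1 hf).trans_lt <| by exact_mod_cast p.lt_succ_self
  refine eq_of_degrees_lt_of_eval_index_eq _ hξ ?_ ?_ fun j hj => ?_
  · rw [card_range, ← mem_degreeLT]
    exact Submodule.sum_mem _ fun k hk => hdegLT _ (hdeg k (Nat.lt_succ_iff.1 (mem_range.1 hk)))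
  · rw [card_range, ← mem_degreeLT]
    exact hdegLT _ (natDegree_one.trans_le p.zero_le)
  · have hjp : j ≤ p := Nat.lt_succ_iff.1 (mem_range.1 hj)
    rw [eval_finsetSum, sum_congr rfl fun k hk => hl k (Nat.lt_succ_iff.1 (mem_range.1 hk)) j hjp,
      sum_ite_eq' _ _ (fun _ => (1 : R)), if_pos hj, eval_one]

end Polynomial

theorem deriv_sum_mul_eval {𝕜 ι : Type*} [NontriviallyNormedField 𝕜] (s : Finset ι) (c : ι → 𝕜)
    (l : ι → 𝕜[X]) (t : 𝕜) :
    deriv (fun x => ∑ i ∈ s, c i * (l i).eval x) t = ∑ i ∈ s, c i * (derivative (l i)).eval t := by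
  have hfun : (fun x => ∑ i ∈ s, c i * (l i).eval x) =
      fun x => (∑ i ∈ s, C (c i) * l i).eval x := by
    simp only [eval_finsetSum, eval_mul, eval_C]
  rw [hfun, Polynomial.deriv, derivative_sum, eval_finsetSum]
  simp only [derivative_C_mul, eval_mul, eval_C]

theorem projection_commutes_with_derivative_general
    (p : ℕ) (ξ : ℕ → ℝ)
    (hξ : ∀ i j, i < j → j ≤ p → ξ i < ξ j)
    (l : ℕ → Polynomial ℝ)
    (hdeg : ∀ i, i ≤ p → (l i).natDegree ≤ p)
    (hl : ∀ i, i ≤ p → ∀ j, j ≤ p → (l i).eval (ξ j) = if i = j then 1 else 0)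
    (e : ℕ → Polynomial ℝ)
    (he : ∀ i, 1 ≤ i → i ≤ p →
      e i = -∑ k ∈ Finset.range i, Polynomial.derivative (l k))
    (α : ℝ → ℝ) (hα : ContDiff ℝ 1 α) :
    ∀ t : ℝ,
      deriv (fun s => ∑ i ∈ Finset.range (p + 1), α (ξ i) * (l i).eval s) t =
        ∑ i ∈ Finset.Icc 1 p, (∫ x in (ξ (i - 1))..(ξ i), deriv α x) * (e i).eval t := by
  intro t
  have hftc (a b : ℝ) : ∫ x in a..b, deriv α x = α b - α a :=
    intervalIntegral.integral_deriv_eq_sub (fun x _ => hα.differentiable one_ne_zero x)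
      ((hα.continuous_deriv le_rfl).intervalIntegrable a b)
  have hmono : StrictMonoOn ξ (range (p + 1) : Set ℕ) := fun i _ j hj hij =>
    hξ i j hij (Nat.lt_succ_iff.1 (mem_range.1 hj))
  have hsum_deriv : ∑ k ∈ range (p + 1), (derivative (l k)).eval t = 0 := by
    rw [← eval_finsetSum, ← derivative_sum, sum_eq_one_of_eval_eq_ite hmono.injOn hdeg hl,
      derivative_one, eval_zero]
  rw [deriv_sum_mul_eval, ← sub_zero (∑ i ∈ range (p + 1), _), ← mul_zero (α (ξ p)),
    ← hsum_deriv, ← sum_Icc_sub_mul_neg_sum_range]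
  refine sum_congr rfl fun i hi => ?_
  rw [hftc, he i (mem_Icc.1 hi).1 (mem_Icc.1 hi).2, eval_neg, eval_finsetSum]

/-- The commuting-diagram property `(π⁰ α)' = π¹ (α')` for the nodal (0-form)
projection `π⁰α = ∑_i α(ξ_i) l_i` and the histopolant (1-form) projection
`π¹f = ∑_i (∫_{ξ_{i-1}}^{ξ_i} f) e_i`, for continuously differentiable `α`. -/
theorem projection_commutes_with_derivative
    (p : ℕ) (hp : 1 ≤ p) (ξ : ℕ → ℝ)
    (hξ : ∀ i j, i < j → j ≤ p → ξ i < ξ j)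
    (l : ℕ → Polynomial ℝ)
    (hdeg : ∀ i, i ≤ p → (l i).natDegree ≤ p)
    (hl : ∀ i, i ≤ p → ∀ j, j ≤ p → (l i).eval (ξ j) = if i = j then 1 else 0)
    (e : ℕ → Polynomial ℝ)
    (he : ∀ i, 1 ≤ i → i ≤ p →
      e i = -∑ k ∈ Finset.range i, Polynomial.derivative (l k))
    (α : ℝ → ℝ) (hα : ContDiff ℝ 1 α) :
    ∀ t : ℝ,
      deriv (fun s => ∑ i ∈ Finset.range (p + 1), α (ξ i) * (l i).eval s) t =
        ∑ i ∈ Finset.Icc 1 p, (∫ x in (ξ (i - 1))..(ξ i), deriv α x) * (e i).eval t :=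
  projection_commutes_with_derivative_general p ξ hξ l hdeg hl e he α hα
end

section
/- Let p ≥ 1, let ξ_0 < ⋯ < ξ_p be distinct real nodes with Lagrange basis polynomials l_0, …, l_p and edge functions e_i = −∑_{k=0}^{i−1} l_k′ (1 ≤ i ≤ p). Then the edge functions e_1, …, e_p form a basis of the space of polynomials of degree at most p−1; in particular they are linearly independent. -/
/-!
The derivatives `l₀′, …, l′ₚ₋₁` are linearly independent: if `∑ cₖ lₖ′ = 0`, then
`L = ∑ cₖ lₖ` is constant, equal to `L(ξₚ) = 0`, while `L(ξⱼ) = cⱼ`. They lie in the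
`p`-dimensional space of polynomials of degree `< p`, hence span it. Up to sign the edge functions
`eᵢ₊₁` are the partial sums `l₀′ + ⋯ + lᵢ′`, which span the same space; being `p` vectors
spanning a `p`-dimensional space, they are linearly independent.
-/

open Polynomial Finset

namespace Polynomial

theorem derivative_mem_degreeLT {R : Type*} [Semiring R] {f : R[X]} {n : ℕ}
    (hf : f.natDegree ≤ n) : derivative f ∈ degreeLT R n := by
  rcases eq_or_ne (derivative f) 0 with h | h
  · simp [h]
  have hf0 : f.natDegree ≠ 0 := fun h0 => h (by rw [eq_C_of_natDegree_eq_zero h0, derivative_C])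
  rw [mem_degreeLT, degree_eq_natDegree h, Nat.cast_lt]
  exact (natDegree_derivative_lt hf0).trans_le hf

theorem finrank_degreeLT (K : Type*) [Field K] (n : ℕ) :
    Module.finrank K (degreeLT K n) = n := by
  rw [Module.finrank_eq_card_basis (degreeLT.basis K n), Fintype.card_fin]

theorem eval_eq_of_derivative_eq_zero {K : Type*} [Field K] [CharZero K] {f : K[X]}
    (hf : derivative f = 0) (x y : K) : f.eval x = f.eval y := by
  rw [eq_C_of_natDegree_eq_zero (derivative_eq_zero.mp hf), eval_C, eval_C]

theorem linearIndependent_derivative_of_eval_eq_ite {K : Type*} [Field K] [CharZero K] (p : ℕ)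
    (ξ : ℕ → K) (l : ℕ → K[X])
    (hl : ∀ i, i ≤ p → ∀ j, j ≤ p → (l i).eval (ξ j) = if i = j then 1 else 0) :
    LinearIndependent K fun k : Fin p => derivative (l k) := by
  rw [Fintype.linearIndependent_iff]
  intro c hc
  set L := ∑ k : Fin p, c k • l k
  have hL : derivative L = 0 := by simpa [L] using hc
  have hL_eval (j : ℕ) (hj : j ≤ p) :
      L.eval (ξ j) = ∑ k : Fin p, if (k : ℕ) = j then c k else 0 := by
    simp only [L, eval_finsetSum, eval_smul, smul_eq_mul]
    refine sum_congr rfl fun k _ => ?_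
    rw [hl k k.2.le j hj]
    simp
  intro j
  calc c j = L.eval (ξ j) := by simp [hL_eval j j.2.le, Fin.val_inj]
    _ = L.eval (ξ p) := eval_eq_of_derivative_eq_zero hL _ _
    _ = 0 := by rw [hL_eval p le_rfl]; exact sum_eq_zero fun k _ => if_neg k.2.ne

end Polynomial

theorem Submodule.span_range_partialSums {R M : Type*} [Ring R] [AddCommGroup M] [Module R M]
    (v : ℕ → M) (p : ℕ) :
    span R (Set.range fun i : Fin p => ∑ k ∈ range (i + 1), v k) =
      span R (Set.range fun k : Fin p => v k) := by
  set S := span R (Set.range fun i : Fin p => ∑ k ∈ range (i + 1), v k)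
  have hS (i : Fin p) : ∑ k ∈ range (i + 1), v k ∈ S := subset_span ⟨i, rfl⟩
  apply le_antisymm
  · rw [span_le]
    rintro _ ⟨i, rfl⟩
    exact sum_mem fun k hk => subset_span ⟨⟨k, by grind⟩, rfl⟩
  · rw [span_le]
    rintro _ ⟨⟨_ | k, hk⟩, rfl⟩
    · simpa using hS ⟨0, hk⟩
    · have := sub_mem (hS ⟨k + 1, hk⟩) (hS ⟨k, by omega⟩)
      rwa [sum_range_succ _ (k + 1), add_sub_cancel_left] at this

theorem edge_functions_basis_general
    (p : ℕ) (ξ : ℕ → ℝ)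
    (l : ℕ → Polynomial ℝ)
    (hdeg : ∀ i, i ≤ p → (l i).natDegree ≤ p)
    (hl : ∀ i, i ≤ p → ∀ j, j ≤ p → (l i).eval (ξ j) = if i = j then 1 else 0)
    (e : ℕ → Polynomial ℝ)
    (he : ∀ i, 1 ≤ i → i ≤ p →
      e i = -∑ k ∈ Finset.range i, Polynomial.derivative (l k)) :
    LinearIndependent ℝ (fun i : Fin p => e (i.1 + 1)) ∧
      Submodule.span ℝ (Set.range (fun i : Fin p => e (i.1 + 1))) =
        Polynomial.degreeLT ℝ p := by
  have hspan_derivative :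
      Submodule.span ℝ (Set.range fun k : Fin p => derivative (l k)) = degreeLT ℝ p := by
    refine Submodule.eq_of_le_of_finrank_eq ?_ ?_
    · rw [Submodule.span_le]
      rintro _ ⟨k, rfl⟩
      exact derivative_mem_degreeLT (hdeg k k.2.le)
    · rw [finrank_span_eq_card (linearIndependent_derivative_of_eval_eq_ite p ξ l hl),
        Fintype.card_fin, finrank_degreeLT]
  have he_partialSums : (fun i : Fin p => e (i.1 + 1)) =
      Neg.neg ∘ fun i : Fin p => ∑ k ∈ range (i + 1), derivative (l k) :=
    funext fun i => he _ i.1.succ_pos i.2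
  have hspan_e : Submodule.span ℝ (Set.range fun i : Fin p => e (i.1 + 1)) = degreeLT ℝ p := by
    rw [he_partialSums, Set.range_comp, Set.image_neg_eq_neg, Submodule.span_neg,
      Submodule.span_range_partialSums, hspan_derivative]
  refine ⟨?_, hspan_e⟩
  rw [linearIndependent_iff_card_eq_finrank_span, Set.finrank, hspan_e, finrank_degreeLT,
    Fintype.card_fin]

/-- The edge functions `e_1, …, e_p` are linearly independent and span the
space of polynomials of degree at most `p - 1` (i.e. of degree `< p`); in particular they
form a basis of that space. -/
theorem edge_functions_basis
    (p : ℕ) (hp : 1 ≤ p) (ξ : ℕ → ℝ)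
    (hξ : ∀ i j, i < j → j ≤ p → ξ i < ξ j)
    (l : ℕ → Polynomial ℝ)
    (hdeg : ∀ i, i ≤ p → (l i).natDegree ≤ p)
    (hl : ∀ i, i ≤ p → ∀ j, j ≤ p → (l i).eval (ξ j) = if i = j then 1 else 0)
    (e : ℕ → Polynomial ℝ)
    (he : ∀ i, 1 ≤ i → i ≤ p →
      e i = -∑ k ∈ Finset.range i, Polynomial.derivative (l k)) :
    LinearIndependent ℝ (fun i : Fin p => e (i.1 + 1)) ∧
      Submodule.span ℝ (Set.range (fun i : Fin p => e (i.1 + 1))) =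
        Polynomial.degreeLT ℝ p :=
  edge_functions_basis_general p ξ l hdeg hl e he
end

section
/- Let p ≥ 1, let ξ_0 < ⋯ < ξ_p be distinct real nodes with Lagrange basis polynomials l_0, …, l_p and edge functions e_i = −∑_{k=0}^{i−1} l_k′ (1 ≤ i ≤ p). Then the 1-form projection reproduces polynomials of degree at most p−1: for every polynomial q of degree ≤ p−1, q(ξ) = ∑_{i=1}^{p} (∫_{ξ_{i−1}}^{ξ_i} q(s) ds) e_i(ξ) for all ξ ∈ ℝ. Equivalently, a polynomial of degree ≤ p−1 is uniquely determined by its integrals over the p cells [ξ_{i−1}, ξ_i]. -/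
/-!
Let `Q` be an antiderivative of `q`, of degree at most `p`. Lagrange interpolation of `Q - Q(ξₚ)`
at the nodes gives `Q - Q(ξₚ) = ∑_{k<p} (Q(ξₖ) - Q(ξₚ)) lₖ`, and differentiating,
`q = ∑_{k<p} (Q(ξₖ) - Q(ξₚ)) lₖ'`. On the other hand the cell integrals are `Q(ξᵢ) - Q(ξᵢ₋₁)`,
and summation by parts turns `∑ᵢ (Q(ξᵢ) - Q(ξᵢ₋₁)) eᵢ` into the same sum.
-/

open Polynomial Finset

namespace Polynomial

section Interpolation

variable {R : Type*} [CommRing R] [IsDomain R] {ι : Type*} [DecidableEq ι]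

theorem eq_sum_eval_smul_of_eval_eq_ite {s : Finset ι} {v : ι → R} (hv : Set.InjOn v s)
    {l : ι → R[X]} (hdeg : ∀ i ∈ s, (l i).degree < #s)
    (hl : ∀ i ∈ s, ∀ j ∈ s, (l i).eval (v j) = if i = j then 1 else 0)
    {P : R[X]} (hP : P.degree < #s) :
    P = ∑ i ∈ s, P.eval (v i) • l i := by
  refine eq_of_degrees_lt_of_eval_index_eq s hv hP ?_ fun j hj => ?_
  · rw [← mem_degreeLT]
    exact Submodule.sum_mem _ fun i hi => Submodule.smul_mem _ _ (mem_degreeLT.2 (hdeg i hi))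
  · simp only [eval_finsetSum, eval_smul, smul_eq_mul]
    rw [sum_congr rfl fun i hi => by rw [hl i hi j hj, mul_ite, mul_one, mul_zero], sum_ite_eq',
      if_pos hj]

theorem derivative_eq_sum_range_sub_smul_derivative {p : ℕ} {v : ℕ → R}
    (hv : Set.InjOn v (range (p + 1))) {l : ℕ → R[X]}
    (hdeg : ∀ i ∈ range (p + 1), (l i).degree < ↑(p + 1))
    (hl : ∀ i ∈ range (p + 1), ∀ j ∈ range (p + 1), (l i).eval (v j) = if i = j then 1 else 0)
    {P : R[X]} (hP : P.degree < ↑(p + 1)) :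
    derivative P = ∑ k ∈ range p, (P.eval (v k) - P.eval (v p)) • derivative (l k) := by
  have hP' : (P - C (P.eval (v p))).degree < #(range (p + 1)) := by
    rw [card_range, ← mem_degreeLT]
    exact Submodule.sub_mem _ (mem_degreeLT.2 hP)
      (mem_degreeLT.2 (degree_C_le.trans_lt (by exact_mod_cast p.succ_pos)))
  have hinterp := eq_sum_eval_smul_of_eval_eq_ite hv (by rwa [card_range]) hl hP'
  simpa [sum_range_succ] using congrArg derivative hinterp

end Interpolation

section Antiderivative

variable {K : Type*} [Field K]

noncomputable def antiderivative (q : K[X]) : K[X] :=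
  q.sum fun n a => C (a / (n + 1)) * X ^ (n + 1)

theorem derivative_antiderivative [CharZero K] (q : K[X]) : derivative (antiderivative q) = q := by
  conv_rhs => rw [← sum_C_mul_X_pow_eq q]
  rw [antiderivative, Polynomial.sum, map_sum, Polynomial.sum]
  refine sum_congr rfl fun n _ => ?_
  have hn : (n + 1 : K) ≠ 0 := by exact_mod_cast n.succ_ne_zero
  rw [derivative_C_mul_X_pow, Nat.add_sub_cancel]
  push_cast
  rw [div_mul_cancel₀ _ hn]

theorem degree_antiderivative_lt {q : K[X]} {n : ℕ} (hq : q.degree < n) :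
    (antiderivative q).degree < ↑(n + 1) := by
  rw [← mem_degreeLT, antiderivative, Polynomial.sum]
  refine Submodule.sum_mem _ fun k hk => mem_degreeLT.2 ((degree_C_mul_X_pow_le _ _).trans_lt ?_)
  have hkn : (k : WithBot ℕ) < n := (le_degree_of_mem_supp k hk).trans_lt hq
  exact_mod_cast Nat.succ_lt_succ (WithBot.coe_lt_coe.1 hkn)

end Antiderivative

theorem integral_eval_eq_sub_of_derivative_eq {q Q : ℝ[X]} (hQ : derivative Q = q) (a b : ℝ) :
    ∫ s in a..b, q.eval s = Q.eval b - Q.eval a :=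
  intervalIntegral.integral_eq_sub_of_hasDerivAt (fun y _ => hQ ▸ Q.hasDerivAt y)
    (q.continuous.intervalIntegrable a b)

end Polynomial

theorem Finset.sum_Icc_sub_smul_sum_range {R M : Type*} [Ring R] [AddCommGroup M] [Module R M]
    (F : ℕ → R) (g : ℕ → M) (p : ℕ) :
    ∑ i ∈ Icc 1 p, (F i - F (i - 1)) • ∑ k ∈ range i, g k = ∑ k ∈ range p, (F p - F k) • g k := by
  induction p with
  | zero => simp
  | succ p ih =>
    have hsplit : ∑ k ∈ range p, (F (p + 1) - F k) • g k
        = (F (p + 1) - F p) • ∑ k ∈ range p, g k + ∑ k ∈ range p, (F p - F k) • g k := by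
      rw [smul_sum, ← sum_add_distrib]
      exact sum_congr rfl fun k _ => by rw [← add_smul, sub_add_sub_cancel]
    rw [sum_Icc_succ_top (by omega), ih, Nat.add_sub_cancel, sum_range_succ,
      sum_range_succ (fun k => (F (p + 1) - F k) • g k), hsplit, smul_add]
    abel

theorem histopolant_reproduces_polynomials_general
    (p : ℕ) (ξ : ℕ → ℝ)
    (hξ : ∀ i j, i < j → j ≤ p → ξ i < ξ j)
    (l : ℕ → Polynomial ℝ)
    (hdeg : ∀ i, i ≤ p → (l i).natDegree ≤ p)
    (hl : ∀ i, i ≤ p → ∀ j, j ≤ p → (l i).eval (ξ j) = if i = j then 1 else 0)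
    (e : ℕ → Polynomial ℝ)
    (he : ∀ i, 1 ≤ i → i ≤ p →
      e i = -∑ k ∈ Finset.range i, Polynomial.derivative (l k))
    (q : Polynomial ℝ) (hq : q.degree < p) :
    ∀ x : ℝ,
      q.eval x =
        ∑ i ∈ Finset.Icc 1 p, (∫ s in (ξ (i - 1))..(ξ i), q.eval s) * (e i).eval x := by
  intro x
  set F : ℕ → ℝ := fun k => (antiderivative q).eval (ξ k)
  have hmem : ∀ {i}, i ∈ range (p + 1) → i ≤ p := fun hi => Nat.lt_succ_iff.1 (mem_range.1 hi)
  have hq_eq : q = ∑ k ∈ range p, (F k - F p) • derivative (l k) := by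
    rw [← derivative_antiderivative q]
    refine derivative_eq_sum_range_sub_smul_derivative ?_ (fun i hi => ?_)
      (fun i hi j hj => hl i (hmem hi) j (hmem hj)) (degree_antiderivative_lt hq)
    · exact (StrictMonoOn.injOn (s := Set.Iic p) fun i _ j hj hij => hξ i j hij hj).mono
        fun _ => hmem
    · exact degree_le_natDegree.trans_lt (by exact_mod_cast Nat.lt_succ_of_le (hdeg i (hmem hi)))
  have hcell : ∀ i ∈ Icc 1 p, (∫ s in (ξ (i - 1))..(ξ i), q.eval s) * (e i).eval x
      = -((F i - F (i - 1)) • ∑ k ∈ range i, (derivative (l k)).eval x) := fun i hi => by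
    obtain ⟨hi1, hip⟩ := mem_Icc.1 hi
    rw [integral_eval_eq_sub_of_derivative_eq (derivative_antiderivative q), he i hi1 hip,
      eval_neg, eval_finsetSum, smul_eq_mul, mul_neg]
  rw [sum_congr rfl hcell, sum_neg_distrib, sum_Icc_sub_smul_sum_range, hq_eq, eval_finsetSum,
    ← sum_neg_distrib]
  simp only [eval_smul, ← neg_smul, neg_sub]

/-- The 1-form projection reproduces polynomials of degree at most `p - 1`:
for every polynomial `q` with `deg q < p`,
`q(ξ) = ∑_{i=1}^p (∫_{ξ_{i-1}}^{ξ_i} q) e_i(ξ)` for all `ξ`. -/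
theorem histopolant_reproduces_polynomials
    (p : ℕ) (hp : 1 ≤ p) (ξ : ℕ → ℝ)
    (hξ : ∀ i j, i < j → j ≤ p → ξ i < ξ j)
    (l : ℕ → Polynomial ℝ)
    (hdeg : ∀ i, i ≤ p → (l i).natDegree ≤ p)
    (hl : ∀ i, i ≤ p → ∀ j, j ≤ p → (l i).eval (ξ j) = if i = j then 1 else 0)
    (e : ℕ → Polynomial ℝ)
    (he : ∀ i, 1 ≤ i → i ≤ p →
      e i = -∑ k ∈ Finset.range i, Polynomial.derivative (l k))
    (q : Polynomial ℝ) (hq : q.degree < p) :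
    ∀ x : ℝ,
      q.eval x =
        ∑ i ∈ Finset.Icc 1 p, (∫ s in (ξ (i - 1))..(ξ i), q.eval s) * (e i).eval x :=
  histopolant_reproduces_polynomials_general p ξ hξ l hdeg hl e he q hq
end

section
/- Let p ≥ 1, let ξ_0 < ⋯ < ξ_p be distinct real nodes with Lagrange basis polynomials l_0, …, l_p and edge functions e_i = −∑_{k=0}^{i−1} l_k′ (1 ≤ i ≤ p), and define π¹f = ∑_{i=1}^{p} (∫_{ξ_{i−1}}^{ξ_i} f(ξ) dξ) e_i for integrable f : [ξ_0, ξ_p] → ℝ. Then π¹ is idempotent: π¹(π¹f) = π¹f for every integrable f, i.e., π¹ is a projection onto the span of e_1, …, e_p. -/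
/-!
The partial sums `L_j = ∑_{k<j} l_k` take the value `1` at the nodes `ξ_i` with `i < j` and `0` at
the others, and `e_j = -L_j'`. By the fundamental theorem of calculus the edge functions are
therefore dual to the cells: `∫_{ξ_{i-1}}^{ξ_i} e_j = L_j(ξ_{i-1}) - L_j(ξ_i) = δ_ij`. Integrating
`π¹f = ∑_j c_j e_j` over the `i`-th cell thus returns its coefficient `c_i = ∫_{ξ_{i-1}}^{ξ_i} f`.
-/

open Polynomial Finset

theorem Polynomial.eval_sum_range_eq_ite_lt {R : Type*} [CommSemiring R] {l : ℕ → R[X]} {x : R}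
    {i n : ℕ} (hl : ∀ k < n, (l k).eval x = if k = i then 1 else 0) :
    (∑ k ∈ range n, l k).eval x = if i < n then 1 else 0 := by
  rw [eval_finsetSum, sum_congr rfl fun k hk => hl k (mem_range.mp hk), sum_ite_eq']
  simp only [mem_range]

theorem Polynomial.integral_eval_derivative (q : ℝ[X]) (a b : ℝ) :
    ∫ x in a..b, (derivative q).eval x = q.eval b - q.eval a :=
  intervalIntegral.integral_eq_sub_of_hasDerivAt (fun x _ => q.hasDerivAt x)
    ((derivative q).continuous.intervalIntegrable _ _)

theorem integral_sum_mul_of_integral_eq_ite {ι : Type*} [DecidableEq ι] {s : Finset ι} {i : ι}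
    (hi : i ∈ s) {a b : ℝ} {g : ι → ℝ → ℝ}
    (hg : ∀ j ∈ s, IntervalIntegrable (g j) MeasureTheory.volume a b)
    (hdual : ∀ j ∈ s, ∫ x in a..b, g j x = if j = i then 1 else 0) (c : ι → ℝ) :
    ∫ x in a..b, ∑ j ∈ s, c j * g j x = c i := by
  rw [intervalIntegral.integral_finsetSum fun j hj => (hg j hj).const_mul (c j)]
  simp_rw [intervalIntegral.integral_const_mul]
  rw [sum_congr rfl fun j hj => by rw [hdual j hj, mul_ite, mul_one, mul_zero], sum_ite_eq' s i,
    if_pos hi]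

theorem integral_edge_eq_ite {p : ℕ} {ξ : ℕ → ℝ} {l e : ℕ → ℝ[X]}
    (hl : ∀ i, i ≤ p → ∀ j, j ≤ p → (l i).eval (ξ j) = if i = j then 1 else 0)
    (he : ∀ i, 1 ≤ i → i ≤ p → e i = -∑ k ∈ range i, derivative (l k))
    {i j : ℕ} (hi : i ∈ Icc 1 p) (hj : j ∈ Icc 1 p) :
    ∫ x in ξ (i - 1)..ξ i, (e j).eval x = if j = i then 1 else 0 := by
  obtain ⟨hi1, hip⟩ := mem_Icc.mp hi
  obtain ⟨hj1, hjp⟩ := mem_Icc.mp hj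
  have hL : ∀ m ≤ p, (∑ k ∈ range j, l k).eval (ξ m) = if m < j then 1 else 0 := fun m hm =>
    eval_sum_range_eq_ite_lt fun k hk => hl k (by omega) m hm
  have he' : e j = derivative (-∑ k ∈ range j, l k) := by
    rw [he j hj1 hjp, derivative_neg, derivative_sum]
  rw [he', integral_eval_derivative, eval_neg, eval_neg, hL i hip, hL (i - 1) (by omega)]
  split_ifs <;> first | omega | norm_num

theorem histopolant_idempotent_general
    (p : ℕ) (ξ : ℕ → ℝ)
    (l : ℕ → Polynomial ℝ)
    (hl : ∀ i, i ≤ p → ∀ j, j ≤ p → (l i).eval (ξ j) = if i = j then 1 else 0)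
    (e : ℕ → Polynomial ℝ)
    (he : ∀ i, 1 ≤ i → i ≤ p →
      e i = -∑ k ∈ Finset.range i, Polynomial.derivative (l k))
    (f : ℝ → ℝ) :
    ∀ x : ℝ,
      (∑ i ∈ Finset.Icc 1 p,
          (∫ s in (ξ (i - 1))..(ξ i),
            ∑ j ∈ Finset.Icc 1 p, (∫ u in (ξ (j - 1))..(ξ j), f u) * (e j).eval s) *
            (e i).eval x) =
        ∑ i ∈ Finset.Icc 1 p, (∫ s in (ξ (i - 1))..(ξ i), f s) * (e i).eval x := by
  intro x
  refine sum_congr rfl fun i hi => congrArg (· * (e i).eval x) ?_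
  exact integral_sum_mul_of_integral_eq_ite hi
    (fun j _ => (e j).continuous.intervalIntegrable _ _)
    (fun j hj => integral_edge_eq_ite hl he hi hj) _

/-- The histopolant projection `π¹f = ∑_i (∫_{ξ_{i-1}}^{ξ_i} f) e_i` is
idempotent: `π¹(π¹ f) = π¹ f` for every integrable `f`. -/
theorem histopolant_idempotent
    (p : ℕ) (hp : 1 ≤ p) (ξ : ℕ → ℝ)
    (hξ : ∀ i j, i < j → j ≤ p → ξ i < ξ j)
    (l : ℕ → Polynomial ℝ)
    (hdeg : ∀ i, i ≤ p → (l i).natDegree ≤ p)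
    (hl : ∀ i, i ≤ p → ∀ j, j ≤ p → (l i).eval (ξ j) = if i = j then 1 else 0)
    (e : ℕ → Polynomial ℝ)
    (he : ∀ i, 1 ≤ i → i ≤ p →
      e i = -∑ k ∈ Finset.range i, Polynomial.derivative (l k))
    (f : ℝ → ℝ) (hf : IntervalIntegrable f MeasureTheory.volume (ξ 0) (ξ p)) :
    ∀ x : ℝ,
      (∑ i ∈ Finset.Icc 1 p,
          (∫ s in (ξ (i - 1))..(ξ i),
            ∑ j ∈ Finset.Icc 1 p, (∫ u in (ξ (j - 1))..(ξ j), f u) * (e j).eval s) *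
            (e i).eval x) =
        ∑ i ∈ Finset.Icc 1 p, (∫ s in (ξ (i - 1))..(ξ i), f s) * (e i).eval x :=
  histopolant_idempotent_general p ξ l hl e he f
end

section
/- Let p ≥ 1, let ξ_0 < ⋯ < ξ_p be distinct real nodes with Lagrange basis polynomials l_0, …, l_p and edge functions e_i = −∑_{k=0}^{i−1} l_k′ (1 ≤ i ≤ p). Then for any p pairwise distinct real points s_1, …, s_p, the p × p matrix A with entries A_{q,k} = e_k(s_q) is invertible. -/
/-!
Since `e_{k+1} = -(l_0' + ⋯ + l_k')`, the matrix factors as `A = -(L U)` with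
`L_{q,j} = l_j'(s_q)` and `U` the upper unitriangular matrix of ones. The derivatives
`l_0', …, l_{p-1}'` are linearly independent: a combination with zero derivative is a
constant combination of `l_0, …, l_{p-1}`, which vanishes at `ξ_p` and hence everywhere, and
its value at `ξ_j` is the `j`-th coefficient. Being `p` independent polynomials of degree
`< p`, their collocation matrix at `p` distinct points is invertible, because a kernel vector
gives a polynomial of degree `< p` with `p` roots.
-/

open Polynomial

namespace Polynomial

variable {K : Type*} [Field K]

theorem isUnit_matrix_eval_of_linearIndependent {n : ℕ} {f : Fin n → K[X]}
    (hf : LinearIndependent K f) (hdeg : ∀ k, f k ∈ degreeLT K n) {s : Fin n → K}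
    (hs : Function.Injective s) : IsUnit (Matrix.of fun q k => (f k).eval (s q)) := by
  rw [Matrix.isUnit_iff_isUnit_det, isUnit_iff_ne_zero]
  intro hdet
  obtain ⟨v, hv0, hv⟩ := Matrix.exists_mulVec_eq_zero_iff.mpr hdet
  refine hv0 (_root_.funext fun k => Fintype.linearIndependent_iff.mp hf v ?_ k)
  have hmem : ∑ k, v k • f k ∈ degreeLT K n :=
    Submodule.sum_mem _ fun k _ => Submodule.smul_mem _ _ (hdeg k)
  refine eq_zero_of_degree_lt_of_eval_index_eq_zero Finset.univ hs.injOn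
    (by simpa using mem_degreeLT.mp hmem) fun q _ => ?_
  simpa [Matrix.mulVec, dotProduct, eval_finsetSum, mul_comm] using congrFun hv q

theorem linearIndependent_derivative_of_eval_eq {ι : Type*} [CharZero K] {l : ι → K[X]}
    {x : ι → K} {y : K} (hx : ∀ i, (l i).eval (x i) = 1)
    (hx' : ∀ i j, i ≠ j → (l i).eval (x j) = 0) (hy : ∀ i, (l i).eval y = 0) :
    LinearIndependent K fun i => derivative (l i) := by
  rw [linearIndependent_iff']
  intro t c hc i hi
  set Q := ∑ j ∈ t, c j • l j
  have hQ : Q = 0 := by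
    have hconst : Q = C (Q.coeff 0) :=
      eq_C_of_derivative_eq_zero (by simpa [Q, map_sum] using hc)
    have hQy : Q.eval y = 0 := by simp [Q, eval_finsetSum, hy]
    rw [hconst, eval_C] at hQy
    rw [hconst, hQy, C_0]
  have hQx : Q.eval (x i) = c i := by
    rw [eval_finsetSum, Finset.sum_eq_single i (fun j _ hji => by simp [hx' j i hji])
      (fun h => absurd hi h)]
    simp [hx]
  rw [← hQx, hQ, eval_zero]

end Polynomial

theorem Matrix.isUnit_ite_le_one_zero {R n : Type*} [CommRing R] [Fintype n] [LinearOrder n] :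
    IsUnit (Matrix.of fun j k : n => if j ≤ k then (1 : R) else 0) := by
  rw [Matrix.isUnit_iff_isUnit_det, Matrix.det_of_isUpperTriangular]
  · simp
  · intro j k hkj
    exact if_neg (not_le.mpr hkj)

theorem Fin.sum_ite_le_eq_sum_range {M : Type*} [AddCommMonoid M] {n : ℕ} (f : ℕ → M)
    (k : Fin n) : ∑ j : Fin n, (if j ≤ k then f j else 0) = ∑ j ∈ Finset.range (k + 1), f j := by
  simp only [Fin.le_iff_val_le_val]
  rw [Fin.sum_univ_eq_sum_range (fun j => if j ≤ k.1 then f j else 0), ← Finset.sum_filter]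
  congr 1
  ext j
  simp only [Finset.mem_filter, Finset.mem_range]
  omega

theorem edge_collocation_matrix_invertible_general
    (p : ℕ) (ξ : ℕ → ℝ)
    (l : ℕ → Polynomial ℝ)
    (hdeg : ∀ i, i ≤ p → (l i).natDegree ≤ p)
    (hl : ∀ i, i ≤ p → ∀ j, j ≤ p → (l i).eval (ξ j) = if i = j then 1 else 0)
    (e : ℕ → Polynomial ℝ)
    (he : ∀ i, 1 ≤ i → i ≤ p →
      e i = -∑ k ∈ Finset.range i, Polynomial.derivative (l k))
    (s : Fin p → ℝ) (hs : Function.Injective s) :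
    IsUnit (Matrix.of fun q k : Fin p => (e (k.1 + 1)).eval (s q)) := by
  set L := Matrix.of fun q (j : Fin p) => (derivative (l j)).eval (s q)
  set U := Matrix.of fun j k : Fin p => if j ≤ k then (1 : ℝ) else 0
  have hL : IsUnit L := by
    refine isUnit_matrix_eval_of_linearIndependent
      (linearIndependent_derivative_of_eval_eq (x := fun j : Fin p => ξ j) (y := ξ p)
        (fun j => by simpa using hl j j.2.le j j.2.le)
        (fun i j hij => by simpa [Fin.val_ne_of_ne hij] using hl i i.2.le j j.2.le)
        (fun j => by simpa [j.2.ne] using hl j j.2.le p le_rfl))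
      (fun j => mem_degreeLT.mpr ?_) hs
    have hlt : (derivative (l j)).natDegree < p :=
      (natDegree_derivative_le _).trans_lt (by have := hdeg j j.2.le; have := j.2; omega)
    exact degree_le_natDegree.trans_lt (by exact_mod_cast hlt)
  have hA : Matrix.of (fun q k : Fin p => (e (k.1 + 1)).eval (s q)) = -(L * U) := by
    ext q k
    simp [L, U, Matrix.mul_apply, he (k + 1) (by omega) k.2, eval_finsetSum,
      Fin.sum_ite_le_eq_sum_range fun j => (derivative (l j)).eval (s q)]
  rw [hA]
  exact (hL.mul Matrix.isUnit_ite_le_one_zero).neg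

/-- For any `p` pairwise distinct points `s_1, …, s_p`, the `p × p` matrix
`A_{q,k} = e_k(s_q)` built from the edge functions is invertible. -/
theorem edge_collocation_matrix_invertible
    (p : ℕ) (hp : 1 ≤ p) (ξ : ℕ → ℝ)
    (hξ : ∀ i j, i < j → j ≤ p → ξ i < ξ j)
    (l : ℕ → Polynomial ℝ)
    (hdeg : ∀ i, i ≤ p → (l i).natDegree ≤ p)
    (hl : ∀ i, i ≤ p → ∀ j, j ≤ p → (l i).eval (ξ j) = if i = j then 1 else 0)
    (e : ℕ → Polynomial ℝ)
    (he : ∀ i, 1 ≤ i → i ≤ p →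
      e i = -∑ k ∈ Finset.range i, Polynomial.derivative (l k))
    (s : Fin p → ℝ) (hs : Function.Injective s) :
    IsUnit (Matrix.of fun q k : Fin p => (e (k.1 + 1)).eval (s q)) :=
  edge_collocation_matrix_invertible_general p ξ l hdeg hl e he s hs
end
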